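/- arXiv:1003.2149 — 3 statements merged into one kernel-verified Lean document; each statement's English description precedes it below -/
import Mathlib

section
/- Let n ≥ 4 and m ≥ 3. Then I_G^{(m)} = I_G^m if and only if n = 4 and G is a path, or a cycle, or the union of two disjoint edges. -/
open MvPolynomial

/-- The prime ideal `P_{ij}` of `S = k[x_1,…,x_n]` generated by all variables `x_t`
with `t ∉ {i,j}`. -/
noncomputable def varPrime (k : Type) [Field k] {n : ℕ} (i j : Fin n) :
    Ideal (MvPolynomial (Fin n) k) :=
  Ideal.span ((fun t => (X t : MvPolynomial (Fin n) k)) '' {t | t ≠ i ∧ t ≠ j})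

/-- The `m`-th symbolic power `I_G^{(m)} = ⋂_{{i,j} ∈ G} P_{ij}^m`; for `m = 1` this is
the ideal `I_G` itself. -/
noncomputable def symbolicPower (k : Type) [Field k] {n : ℕ} (G : SimpleGraph (Fin n))
    (m : ℕ) : Ideal (MvPolynomial (Fin n) k) :=
  ⨅ (i : Fin n) (j : Fin n) (_ : G.Adj i j), (varPrime k i j) ^ m

/-- `G` is a path: its edges form a Hamiltonian path on the `n` vertices. -/
def IsPathGraph {n : ℕ} (G : SimpleGraph (Fin n)) : Prop :=
  ∃ f : Fin n ≃ Fin n, ∀ i j : Fin n,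
    G.Adj (f i) (f j) ↔ (i.val + 1 = j.val ∨ j.val + 1 = i.val)

/-- `G` is a cycle: its edges form a Hamiltonian cycle on the `n` vertices. -/
def IsCycleGraph {n : ℕ} (G : SimpleGraph (Fin n)) : Prop :=
  ∃ f : Fin n ≃ Fin n, ∀ i j : Fin n,
    G.Adj (f i) (f j) ↔ ((i.val + 1) % n = j.val ∨ (j.val + 1) % n = i.val)

/-- `G` is the union of two disjoint edges: `n = 4` and `G` consists of exactly two
edges with no common vertex. -/
def IsTwoDisjointEdges {n : ℕ} (G : SimpleGraph (Fin n)) : Prop :=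
  n = 4 ∧ ∃ a b c d : Fin n, a ≠ b ∧ a ≠ c ∧ a ≠ d ∧ b ≠ c ∧ b ≠ d ∧ c ≠ d ∧
    ∀ u v : Fin n, G.Adj u v ↔
      ((u = a ∧ v = b) ∨ (u = b ∧ v = a) ∨ (u = c ∧ v = d) ∨ (u = d ∧ v = c))

/-!
Membership in `P_{ij}^m`, and hence in `I_G^{(m)}`, can be read off the exponents of monomials:
`x^d ∈ P_{ij}^m` iff `x^d` has degree at least `m` in the variables other than `x_i, x_j`.
Since `I_G^m ⊆ I_G^{(m)}` always, inequality is shown by a weight argument: if every monomial of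
`I_G` has `ω`-weight at least `W`, then every monomial of `I_G^m` has weight at least `m W`, so a
monomial of `I_G^{(m)}` of smaller weight lies outside `I_G^m`. Such monomials exist when `n ≥ 5`
(`G` complete or not) and when `n = 4` and some vertex is adjacent to all others.
The remaining graphs on four vertices, where every vertex has a neighbour and a non-neighbour,
are exactly those containing a square whose sides are alternately edges and non-edges:
the path, the cycle and two disjoint edges. For them every monomial of `I_G^{(m)}` is divisible
by a product of `m` generators `x_a x_b` of `I_G`, `{a, b}` a non-edge, chosen greedily.
-/

open Finsupp

theorem Ideal.pow_mem_pow_of_ne_zero {R : Type*} [CommSemiring R] {I : Ideal R} {p : R} {e : ℕ}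
    (h : e ≠ 0 → p ∈ I) : p ^ e ∈ I ^ e := by
  rcases eq_or_ne e 0 with rfl | he
  · simp
  · exact Ideal.pow_mem_pow (h he) e

theorem Finsupp.weight_mono {σ : Type*} (ω : σ → ℕ) :
    Monotone (weight ω : (σ →₀ ℕ) → ℕ) := fun d e hde => by
  obtain ⟨f, rfl⟩ := le_iff_exists_add.mp hde
  simp

namespace MvPolynomial

variable {σ R : Type*} [CommSemiring R]

theorem mem_of_forall_monomial_mem {J : Ideal (MvPolynomial σ R)} {p : MvPolynomial σ R}
    (h : ∀ d ∈ p.support, monomial d 1 ∈ J) : p ∈ J := by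
  rw [p.as_sum]
  refine J.sum_mem fun d hd => ?_
  rw [← mul_one (coeff d p), ← C_mul_monomial]
  exact J.mul_mem_left _ (h d hd)

variable (R) in
noncomputable def weightIdeal (ω : σ → ℕ) (W : ℕ) : Ideal (MvPolynomial σ R) :=
  restrictSupportIdeal R {d | W ≤ weight ω d} fun _ _ hde hd => hd.trans (weight_mono ω hde)

theorem mem_weightIdeal_iff {ω : σ → ℕ} {W : ℕ} {p : MvPolynomial σ R} :
    p ∈ weightIdeal R ω W ↔ ∀ d ∈ p.support, W ≤ weight ω d :=
  Iff.rfl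

theorem weightIdeal_mul_le (ω : σ → ℕ) (A B : ℕ) :
    weightIdeal R ω A * weightIdeal R ω B ≤ weightIdeal R ω (A + B) := by
  classical
  refine Ideal.mul_le.mpr fun p hp q hq => mem_weightIdeal_iff.mpr fun d hd => ?_
  obtain ⟨e, he, f, hf, rfl⟩ := Finset.mem_add.mp (support_mul p q hd)
  simpa using add_le_add (mem_weightIdeal_iff.mp hp e he) (mem_weightIdeal_iff.mp hq f hf)

theorem pow_le_weightIdeal {ω : σ → ℕ} {W : ℕ} {I : Ideal (MvPolynomial σ R)}
    (h : I ≤ weightIdeal R ω W) (m : ℕ) : I ^ m ≤ weightIdeal R ω (m * W) := by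
  induction m with
  | zero => exact fun p _ => mem_weightIdeal_iff.mpr fun d _ => by simp
  | succ m ih =>
    rw [pow_succ, Nat.succ_mul]
    exact (Ideal.mul_mono ih h).trans (weightIdeal_mul_le ω _ _)

theorem monomial_mem_span_X_image_pow (s : Set σ) {m : ℕ} {d : σ →₀ ℕ}
    (hd : m ≤ weight (s.indicator 1 : σ → ℕ) d) :
    monomial d (1 : R) ∈ Ideal.span (X '' s) ^ m := by
  induction m generalizing d with
  | zero => simp
  | succ m ih =>
    obtain ⟨t, ht, hdt⟩ : ∃ t ∈ s, d t ≠ 0 := by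
      by_contra! h
      have : weight (s.indicator 1 : σ → ℕ) d = 0 := by
        rw [weight_apply, Finsupp.sum]
        refine Finset.sum_eq_zero fun t _ => ?_
        by_cases hts : t ∈ s <;> simp [hts, h]
      omega
    have hw := weight_sub_single_add (w := (s.indicator 1 : σ → ℕ)) hdt
    rw [Set.indicator_of_mem ht] at hw
    rw [← sub_add_single_one_cancel hdt, ← mul_one (1 : R), ← monomial_mul, pow_succ]
    exact Ideal.mul_mem_mul (ih (by simp only [Pi.one_apply] at hw; omega)) (Ideal.subset_span ⟨t, ht, rfl⟩)

theorem span_X_image_pow (s : Set σ) (m : ℕ) :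
    Ideal.span (X '' s) ^ m = weightIdeal R (s.indicator 1) m := by
  refine le_antisymm ?_ fun p hp => mem_of_forall_monomial_mem fun d hd =>
    monomial_mem_span_X_image_pow s (mem_weightIdeal_iff.mp hp d hd)
  have hX : Ideal.span (X '' s) ≤ weightIdeal R (s.indicator 1) 1 := by
    refine Ideal.span_le.mpr ?_
    rintro _ ⟨t, ht, rfl⟩
    refine mem_weightIdeal_iff.mpr fun d hd => ?_
    rw [Finset.mem_singleton.mp (support_monomial_subset hd)]
    simp [weight_single, ht]
  simpa using pow_le_weightIdeal hX m

end MvPolynomial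

section OutsideWeight

variable {σ : Type*}

/-- `weight (outsideWeight s) d` is the degree of `x^d` in the variables outside `s`. -/
noncomputable def outsideWeight (s : Finset σ) : σ → ℕ := (↑s : Set σ)ᶜ.indicator 1

theorem outsideWeight_apply [DecidableEq σ] (s : Finset σ) (t : σ) :
    outsideWeight s t = if t ∈ s then 0 else 1 := by
  by_cases ht : t ∈ s <;> simp [outsideWeight, ht]

theorem weight_outsideWeight_add_sum [Fintype σ] (s : Finset σ) (d : σ →₀ ℕ) :
    weight (outsideWeight s) d + ∑ t ∈ s, d t = degree d := by
  classical
  have h_in : ∑ t ∈ s, d t • outsideWeight s t = 0 :=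
    Finset.sum_eq_zero fun t ht => by simp [outsideWeight, ht]
  have h_out : ∑ t ∈ sᶜ, d t • outsideWeight s t = ∑ t ∈ sᶜ, d t :=
    Finset.sum_congr rfl fun t ht => by simp [outsideWeight, Finset.mem_compl.mp ht]
  rw [weight_eq_sum, degree_eq_sum, ← Finset.sum_compl_add_sum s, ← Finset.sum_compl_add_sum s,
    h_in, h_out, add_zero]

theorem weight_outsideWeight_pair_add [Fintype σ] [DecidableEq σ] {i j : σ} (hij : i ≠ j)
    (d : σ →₀ ℕ) : weight (outsideWeight {i, j}) d + d i + d j = degree d := by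
  rw [← weight_outsideWeight_add_sum, Finset.sum_pair hij, add_assoc]

end OutsideWeight

section SymbolicPower

variable {k : Type} [Field k] {n : ℕ}

theorem varPrime_pow (i j : Fin n) (m : ℕ) :
    varPrime k i j ^ m = weightIdeal k (outsideWeight {i, j}) m := by
  rw [varPrime, outsideWeight, ← span_X_image_pow]
  congr
  ext t
  simp

def SymbolicExponent (G : SimpleGraph (Fin n)) (m : ℕ) (d : Fin n →₀ ℕ) : Prop :=
  ∀ i j, G.Adj i j → m ≤ weight (outsideWeight {i, j}) d

theorem mem_symbolicPower_iff {G : SimpleGraph (Fin n)} {m : ℕ} {p : MvPolynomial (Fin n) k} :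
    p ∈ symbolicPower k G m ↔ ∀ d ∈ p.support, SymbolicExponent G m d := by
  simp only [symbolicPower, Ideal.mem_iInf, varPrime_pow, mem_weightIdeal_iff, SymbolicExponent]
  exact ⟨fun h d hd i j hij => h i j hij d hd, fun h i j hij d hd => h d hd i j hij⟩

theorem monomial_mem_symbolicPower {G : SimpleGraph (Fin n)} {m : ℕ} {d : Fin n →₀ ℕ}
    (hd : SymbolicExponent G m d) : monomial d (1 : k) ∈ symbolicPower k G m :=
  mem_symbolicPower_iff.mpr fun _ he => by
    rwa [Finset.mem_singleton.mp (support_monomial_subset he)]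

theorem pow_le_symbolicPower (G : SimpleGraph (Fin n)) (m : ℕ) :
    symbolicPower k G 1 ^ m ≤ symbolicPower k G m := by
  refine le_iInf₂ fun i j => le_iInf fun hij => Ideal.pow_right_mono ?_ m
  have : symbolicPower k G 1 ≤ varPrime k i j ^ 1 := (iInf₂_le i j).trans (iInf_le _ hij)
  rwa [pow_one] at this

theorem symbolicPower_ne_pow_of_weight {G : SimpleGraph (Fin n)} {m W : ℕ} (ω : Fin n → ℕ)
    (hI : ∀ d, SymbolicExponent G 1 d → W ≤ weight ω d)
    {w : Fin n →₀ ℕ} (hw : SymbolicExponent G m w) (hlt : weight ω w < m * W) :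
    symbolicPower k G m ≠ symbolicPower k G 1 ^ m := by
  intro heq
  have hle : symbolicPower k G 1 ≤ weightIdeal k ω W := fun p hp =>
    mem_weightIdeal_iff.mpr fun d hd => hI d (mem_symbolicPower_iff.mp hp d hd)
  have hmem := pow_le_weightIdeal hle m (heq ▸ monomial_mem_symbolicPower (k := k) hw)
  exact hlt.not_ge (mem_weightIdeal_iff.mp hmem w (by simp))

theorem symbolicPower_eq_pow_of_monomial_mem {G : SimpleGraph (Fin n)} {m : ℕ}
    (h : ∀ d, SymbolicExponent G m d → monomial d (1 : k) ∈ symbolicPower k G 1 ^ m) :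
    symbolicPower k G m = symbolicPower k G 1 ^ m :=
  le_antisymm (fun _ hp => mem_of_forall_monomial_mem fun d hd =>
    h d (mem_symbolicPower_iff.mp hp d hd)) (pow_le_symbolicPower G m)

theorem X_mul_X_mem_symbolicPower_one {G : SimpleGraph (Fin n)} {x y : Fin n} (hxy : x ≠ y)
    (h : ¬G.Adj x y) : X x * X y ∈ symbolicPower k G 1 := by
  rw [X, X, monomial_mul, one_mul]
  refine monomial_mem_symbolicPower fun i j hij => ?_
  have : x ∉ ({i, j} : Finset (Fin n)) ∨ y ∉ ({i, j} : Finset (Fin n)) := by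
    simp only [Finset.mem_insert, Finset.mem_singleton]
    by_contra! hc
    rcases hc with ⟨rfl | rfl, rfl | rfl⟩
    all_goals first | exact hxy rfl | exact h hij | exact h hij.symm
  rcases this with hx | hy
  · simp [weight_single, outsideWeight_apply, hx]
  · simp [weight_single, outsideWeight_apply, hy]

theorem SymbolicExponent.ne_zero {G : SimpleGraph (Fin n)} {m : ℕ} {d : Fin n →₀ ℕ}
    (hd : SymbolicExponent G m d) (hm : m ≠ 0) {i j : Fin n} (hij : G.Adj i j) : d ≠ 0 := by
  rintro rfl
  have := hd i j hij
  simp only [map_zero] at this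
  omega

theorem SymbolicExponent.two_le_degree [NeZero n] {G : SimpleGraph (Fin n)}
    (hG : ∀ v, ∃ u, G.Adj v u) {d : Fin n →₀ ℕ} (hd : SymbolicExponent G 1 d) :
    2 ≤ degree d := by
  obtain ⟨u₀, hu₀⟩ := hG 0
  obtain ⟨t, ht⟩ := Finsupp.ne_iff.mp (hd.ne_zero one_ne_zero hu₀)
  obtain ⟨u, hu⟩ := hG t
  have := hd t u hu
  have := weight_outsideWeight_pair_add (G.ne_of_adj hu) d
  simp only [Finsupp.coe_zero, Pi.zero_apply] at ht
  omega

theorem SymbolicExponent.three_le_degree {G : SimpleGraph (Fin n)} (hn : 2 ≤ n)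
    (hG : ∀ u v, u ≠ v → G.Adj u v) {d : Fin n →₀ ℕ} (hd : SymbolicExponent G 1 d) :
    3 ≤ degree d := by
  have : Nontrivial (Fin n) := Fin.nontrivial_iff_two_le.mpr hn
  obtain ⟨a, b, hab⟩ := exists_pair_ne (Fin n)
  obtain ⟨t, ht⟩ := Finsupp.ne_iff.mp (hd.ne_zero one_ne_zero (hG a b hab))
  simp only [Finsupp.coe_zero, Pi.zero_apply] at ht
  by_contra! hlt
  have h_other : ∀ s, s ≠ t → d s = 0 := fun s hs => by
    have := hd t s (hG t s hs.symm)
    have := weight_outsideWeight_pair_add hs.symm d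
    omega
  have h_deg : degree d = d t := by
    rw [degree_eq_sum]
    exact Finset.sum_eq_single t (fun s _ hs => h_other s hs) (by simp)
  obtain ⟨s, hs⟩ := exists_ne t
  have := hd t s (hG t s hs.symm)
  have := weight_outsideWeight_pair_add hs.symm d
  omega

theorem symbolicPower_ne_pow_of_not_adj {G : SimpleGraph (Fin n)} (hn : 5 ≤ n)
    (hG : ∀ v, ∃ u, G.Adj v u) {m : ℕ} (hm : 3 ≤ m) {u v : Fin n} (huv : u ≠ v)
    (hnadj : ¬G.Adj u v) : symbolicPower k G m ≠ symbolicPower k G 1 ^ m := by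
  have : NeZero n := ⟨by omega⟩
  obtain ⟨S, hS, hScard⟩ := Finset.exists_subset_card_eq (s := {u, v}ᶜ) (n := 3) (by
    rw [Finset.card_compl, Finset.card_pair huv, Fintype.card_fin]; omega)
  let w : Fin n →₀ ℕ := single u (m - 2) + single v (m - 2) + ∑ t ∈ S, single t 1
  have hw : ∀ t, w t ≤ if t = u ∨ t = v then m - 2 else 1 := fun t => by
    have : t ∈ S → t ∉ ({u, v} : Finset (Fin n)) := fun ht => Finset.mem_compl.mp (hS ht)
    simp only [w, Finsupp.add_apply, Finsupp.finsetSum_apply, Finsupp.single_apply,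
      Finset.sum_ite_eq', Finset.mem_insert, Finset.mem_singleton] at this ⊢
    split_ifs <;> simp_all
  have hdeg : degree w = 2 * m - 1 := by
    simp only [w, map_add, map_sum, degree_single, Finset.sum_const, hScard, smul_eq_mul]
    omega
  refine symbolicPower_ne_pow_of_weight (fun _ => 1) (W := 2) (fun d hd => ?_) (w := w)
    (fun i j hij => ?_) ?_
  · exact degree_eq_weight_one (R := ℕ) ▸ hd.two_le_degree hG
  · have := weight_outsideWeight_pair_add (G.ne_of_adj hij) w
    have hi := hw i
    have hj := hw j
    have : ¬((i = u ∨ i = v) ∧ (j = u ∨ j = v)) := by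
      rintro ⟨hiu | hiv, hju | hjv⟩ <;> subst_vars <;> simp_all [G.adj_comm]
    split_ifs at hi hj <;> omega
  · rw [← degree_eq_weight_one (R := ℕ)]
    omega

theorem symbolicPower_ne_pow_of_forall_adj {G : SimpleGraph (Fin n)} (hn : 4 ≤ n)
    (hG : ∀ u v, u ≠ v → G.Adj u v) {m : ℕ} (hm : 2 ≤ m) :
    symbolicPower k G m ≠ symbolicPower k G 1 ^ m := by
  obtain ⟨S, -, hScard⟩ := Finset.exists_subset_card_eq (s := (Finset.univ : Finset (Fin n)))
    (n := 4) (by simpa using hn)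
  let w : Fin n →₀ ℕ := ∑ t ∈ S, single t ((m + 1) / 2)
  have hw : ∀ t, w t ≤ (m + 1) / 2 := fun t => by
    simp only [w, Finsupp.finsetSum_apply, Finsupp.single_apply, Finset.sum_ite_eq']
    split_ifs <;> omega
  have hdeg : degree w = 4 * ((m + 1) / 2) := by
    simp [w, map_sum, degree_single, hScard]
  refine symbolicPower_ne_pow_of_weight (fun _ => 1) (W := 3) (fun d hd => ?_) (w := w)
    (fun i j hij => ?_) ?_
  · exact degree_eq_weight_one (R := ℕ) ▸ hd.three_le_degree (by omega) hG
  · have := weight_outsideWeight_pair_add (G.ne_of_adj hij) w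
    have := hw i
    have := hw j
    omega
  · rw [← degree_eq_weight_one (R := ℕ)]
    omega

section FourVertices

theorem Fin.exists_equiv_four {a b c d : Fin 4} (hab : a ≠ b) (hac : a ≠ c) (had : a ≠ d)
    (hbc : b ≠ c) (hbd : b ≠ d) (hcd : c ≠ d) :
    ∃ g : Fin 4 ≃ Fin 4, g 0 = a ∧ g 1 = b ∧ g 2 = c ∧ g 3 = d := by
  have hinj : Function.Injective ![a, b, c, d] := by
    intro i j h
    fin_cases i <;> fin_cases j <;> simp_all [eq_comm]
  exact ⟨Equiv.ofBijective _ (Finite.injective_iff_bijective.mp hinj), rfl, rfl, rfl, rfl⟩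

theorem Finsupp.degree_eq_of_equiv_fin_four (g : Fin 4 ≃ Fin 4) (d : Fin 4 →₀ ℕ) :
    degree d = d (g 0) + d (g 1) + d (g 2) + d (g 3) := by
  rw [degree_eq_sum, ← g.sum_comp, Fin.sum_univ_four]

theorem symbolicPower_ne_pow_of_universal_vertex {G : SimpleGraph (Fin 4)} {v : Fin 4}
    (hv : ∀ u, u ≠ v → G.Adj v u) {m : ℕ} (hm : 2 ≤ m) :
    symbolicPower k G m ≠ symbolicPower k G 1 ^ m := by
  let g := Equiv.swap 0 v
  have hadj : ∀ i, i ≠ 0 → G.Adj (g 0) (g i) := fun i hi => by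
    simpa [g] using hv (g i) (by simpa [g] using g.injective.ne hi)
  let w : Fin 4 →₀ ℕ :=
    equivFunOnFinite.symm (![(m + 1) / 2, (m + 1) / 2, (m + 1) / 2, m / 2] ∘ g.symm)
  have hw : ∀ i, w (g i) = ![(m + 1) / 2, (m + 1) / 2, (m + 1) / 2, m / 2] i := by
    simp [w]
  have hw_le : ∀ t, w t ≤ (m + 1) / 2 := fun t => by
    obtain ⟨i, rfl⟩ := g.surjective t
    rw [hw]
    fin_cases i <;> simp [Nat.div_le_div_right]
  have hdeg := Finsupp.degree_eq_of_equiv_fin_four g w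
  simp only [hw, Matrix.cons_val] at hdeg
  have hω (d : Fin 4 →₀ ℕ) : weight (outsideWeight {g 0}) d + d (g 0) = degree d := by
    simpa using weight_outsideWeight_add_sum {g 0} d
  refine symbolicPower_ne_pow_of_weight (outsideWeight {g 0}) (W := 2) (fun d hd => ?_) (w := w)
    (fun i j hij => ?_) ?_
  · have := hd _ _ (hadj 1 (by decide))
    have := hd _ _ (hadj 2 (by decide))
    have := hd _ _ (hadj 3 (by decide))
    have := weight_outsideWeight_pair_add (g.injective.ne (by decide : (0 : Fin 4) ≠ 1)) d
    have := weight_outsideWeight_pair_add (g.injective.ne (by decide : (0 : Fin 4) ≠ 2)) d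
    have := weight_outsideWeight_pair_add (g.injective.ne (by decide : (0 : Fin 4) ≠ 3)) d
    have := Finsupp.degree_eq_of_equiv_fin_four g d
    have := hω d
    omega
  · have := weight_outsideWeight_pair_add (G.ne_of_adj hij) w
    have := hw_le i
    have := hw_le j
    omega
  · have := hω w
    rw [hw, Matrix.cons_val_zero] at this
    omega

def IsAlternatingSquare (G : SimpleGraph (Fin 4)) (g : Fin 4 ≃ Fin 4) : Prop :=
  G.Adj (g 0) (g 1) ∧ ¬G.Adj (g 1) (g 2) ∧ G.Adj (g 2) (g 3) ∧ ¬G.Adj (g 3) (g 0)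

theorem IsAlternatingSquare.symbolicPower_eq_pow {G : SimpleGraph (Fin 4)} {g : Fin 4 ≃ Fin 4}
    (hg : IsAlternatingSquare G g) (m : ℕ) : symbolicPower k G m = symbolicPower k G 1 ^ m := by
  obtain ⟨h01, h12, h23, h30⟩ := hg
  refine symbolicPower_eq_pow_of_monomial_mem fun x hx => ?_
  have hne : ∀ {i j : Fin 4}, i ≠ j → g i ≠ g j := g.injective.ne
  have hdeg := Finsupp.degree_eq_of_equiv_fin_four g x
  have c01 := hx _ _ h01
  have c23 := hx _ _ h23
  have e01 := weight_outsideWeight_pair_add (hne (by decide : (0 : Fin 4) ≠ 1)) x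
  have e23 := weight_outsideWeight_pair_add (hne (by decide : (2 : Fin 4) ≠ 3)) x
  have c02 : G.Adj (g 0) (g 2) → m ≤ x (g 1) + x (g 3) := fun h => by
    have := hx _ _ h
    have := weight_outsideWeight_pair_add (hne (by decide : (0 : Fin 4) ≠ 2)) x
    omega
  have c13 : G.Adj (g 1) (g 3) → m ≤ x (g 0) + x (g 2) := fun h => by
    have := hx _ _ h
    have := weight_outsideWeight_pair_add (hne (by decide : (1 : Fin 4) ≠ 3)) x
    omega
  -- cover `x` by `m` products `x_a x_b` over non-edges `{a, b}`, greedily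
  set e30 := min (x (g 0)) (min (x (g 3)) m)
  set e12 := min (x (g 1)) (min (x (g 2)) (m - e30))
  set e02 := min (x (g 0) - e30) (m - e30 - e12)
  set e13 := m - e30 - e12 - e02
  have hsum : e30 + e12 + e02 + e13 = m := by omega
  have hP : (X (g 3) * X (g 0)) ^ e30 * (X (g 1) * X (g 2)) ^ e12 * (X (g 0) * X (g 2)) ^ e02 *
      (X (g 1) * X (g 3)) ^ e13 ∈ symbolicPower k G 1 ^ m := by
    rw [← hsum, pow_add, pow_add, pow_add]
    refine Ideal.mul_mem_mul (Ideal.mul_mem_mul (Ideal.mul_mem_mul ?_ ?_) ?_) ?_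
    · exact Ideal.pow_mem_pow (X_mul_X_mem_symbolicPower_one (hne (by decide)) h30) _
    · exact Ideal.pow_mem_pow (X_mul_X_mem_symbolicPower_one (hne (by decide)) h12) _
    · exact Ideal.pow_mem_pow_of_ne_zero fun he =>
        X_mul_X_mem_symbolicPower_one (hne (by decide)) fun h => he (by have := c02 h; omega)
    · exact Ideal.pow_mem_pow_of_ne_zero fun he =>
        X_mul_X_mem_symbolicPower_one (hne (by decide)) fun h => he (by have := c13 h; omega)
  refine Ideal.mem_of_dvd _ ?_ hP
  simp only [X, monomial_mul, monomial_pow, one_pow, mul_one, monomial_dvd_monomial, one_dvd,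
    and_true]
  refine Or.inr fun t => ?_
  obtain ⟨i, rfl⟩ := g.surjective t
  fin_cases i <;> simp <;> omega

theorem exists_isAlternatingSquare_of_isPathGraph_or_isCycleGraph_or_isTwoDisjointEdges
    {G : SimpleGraph (Fin 4)}
    (hG : IsPathGraph G ∨ IsCycleGraph G ∨ IsTwoDisjointEdges G) :
    ∃ g, IsAlternatingSquare G g := by
  rcases hG with ⟨f, hf⟩ | ⟨f, hf⟩ | ⟨-, a, b, c, d, hab, hac, had, hbc, hbd, hcd, hf⟩
  · refine ⟨(Equiv.swap 0 1).trans f, ?_⟩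
    simp [IsAlternatingSquare, Equiv.swap_apply_of_ne_of_ne, hf]
  · refine ⟨(Equiv.swap 0 1).trans f, ?_⟩
    simp [IsAlternatingSquare, Equiv.swap_apply_of_ne_of_ne, hf]
  · obtain ⟨g, rfl, rfl, rfl, rfl⟩ := Fin.exists_equiv_four hab hac had hbc hbd hcd
    refine ⟨g, ?_⟩
    simp [IsAlternatingSquare, hf]

theorem exists_isAlternatingSquare_of_forall_adj_of_forall_not_adj {G : SimpleGraph (Fin 4)}
    (hadj : ∀ v, ∃ u, G.Adj v u) (hnadj : ∀ v, ∃ u, u ≠ v ∧ ¬G.Adj v u) :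
    ∃ g, IsAlternatingSquare G g := by
  obtain ⟨c, hc, h0c⟩ := hnadj 0
  obtain ⟨b, h0b⟩ := hadj 0
  obtain ⟨d, -, hd⟩ := Finset.exists_mem_notMem_of_card_lt_card (s := {0, b, c})
    (t := Finset.univ) (Finset.card_le_three.trans_lt (by simp))
  simp only [Finset.mem_insert, Finset.mem_singleton, not_or] at hd
  obtain ⟨g, h0, rfl, rfl, rfl⟩ :=
    Fin.exists_equiv_four (G.ne_of_adj h0b) hc.symm (Ne.symm hd.1)
    (fun h => h0c (h ▸ h0b)) (Ne.symm hd.2.1) (Ne.symm hd.2.2)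
  rw [← h0] at h0b h0c
  -- every vertex has a non-neighbour
  have hthird (i l : Fin 4) (hij : ∀ j, j ≠ i → j ≠ l → G.Adj (g i) (g j)) :
      ¬G.Adj (g i) (g l) := by
    intro hil
    obtain ⟨u, hu, hiu⟩ := hnadj (g i)
    obtain ⟨j, rfl⟩ := g.surjective u
    exact hiu (hij j (g.injective.ne_iff.mp hu) (by rintro rfl; exact hiu hil))
  by_cases h23 : G.Adj (g 2) (g 3)
  · by_cases h13 : G.Adj (g 1) (g 3)
    · refine ⟨g, h0b, hthird 1 2 fun j => ?_, h23, hthird 3 0 fun j => ?_⟩ <;>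
        fin_cases j <;> simp [h0b.symm, h13, h13.symm, h23.symm]
    · refine ⟨(Equiv.swap 0 1).trans g, ?_⟩
      simp [IsAlternatingSquare, Equiv.swap_apply_of_ne_of_ne, h0b.symm, h0c, h23, G.adj_comm, h13]
  · have h21 : G.Adj (g 2) (g 1) := by
      obtain ⟨u, h2u⟩ := hadj (g 2)
      obtain ⟨j, rfl⟩ := g.surjective u
      fin_cases j <;> simp_all [G.adj_comm]
    have h13 : ¬G.Adj (g 1) (g 3) := hthird 1 3 fun j => by
      fin_cases j <;> simp [h0b.symm, h21.symm]
    have h30 : G.Adj (g 3) (g 0) := by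
      obtain ⟨u, h3u⟩ := hadj (g 3)
      obtain ⟨j, rfl⟩ := g.surjective u
      fin_cases j <;> simp_all [G.adj_comm]
    refine ⟨((Equiv.swap 0 3).trans (Equiv.swap 0 1)).trans g, ?_⟩
    simp [IsAlternatingSquare, Equiv.swap_apply_of_ne_of_ne, h30, h0c, h21, h13]

theorem IsAlternatingSquare.isPathGraph_or_isCycleGraph_or_isTwoDisjointEdges
    {G : SimpleGraph (Fin 4)} {g : Fin 4 ≃ Fin 4} (hg : IsAlternatingSquare G g) :
    IsPathGraph G ∨ IsCycleGraph G ∨ IsTwoDisjointEdges G := by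
  obtain ⟨h01, h12, h23, h30⟩ := hg
  have h10 := h01.symm
  have h32 := h23.symm
  have h21 : ¬G.Adj (g 2) (g 1) := fun h => h12 h.symm
  have h03 : ¬G.Adj (g 0) (g 3) := fun h => h30 h.symm
  have h20 : G.Adj (g 2) (g 0) ↔ G.Adj (g 0) (g 2) := G.adj_comm _ _
  have h31 : G.Adj (g 3) (g 1) ↔ G.Adj (g 1) (g 3) := G.adj_comm _ _
  by_cases h02 : G.Adj (g 0) (g 2) <;> by_cases h13 : G.Adj (g 1) (g 3)
  · -- the cycle `g 1, g 0, g 2, g 3`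
    refine .inr (.inl ⟨(Equiv.swap 0 1).trans g, fun i j => ?_⟩)
    fin_cases i <;> fin_cases j <;> simp [Equiv.swap_apply_of_ne_of_ne, *]
  · -- the path `g 1, g 0, g 2, g 3`
    refine .inl ⟨(Equiv.swap 0 1).trans g, fun i j => ?_⟩
    fin_cases i <;> fin_cases j <;> simp [Equiv.swap_apply_of_ne_of_ne, *]
  · -- the path `g 0, g 1, g 3, g 2`
    refine .inl ⟨(Equiv.swap 2 3).trans g, fun i j => ?_⟩
    fin_cases i <;> fin_cases j <;> simp [Equiv.swap_apply_of_ne_of_ne, *]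
  · refine .inr (.inr ⟨rfl, g 0, g 1, g 2, g 3, ?_⟩)
    simp only [ne_eq, EmbeddingLike.apply_eq_iff_eq]
    refine ⟨by decide, by decide, by decide, by decide, by decide, by decide, fun u v => ?_⟩
    obtain ⟨i, rfl⟩ := g.surjective u
    obtain ⟨j, rfl⟩ := g.surjective v
    fin_cases i <;> fin_cases j <;> simp [*]

end FourVertices

end SymbolicPower

/-- Let `n ≥ 4` and `m ≥ 3`. Then `I_G^{(m)} = I_G^m` if and only if `n = 4` and `G`
is a path, or a cycle, or the union of two disjoint edges. -/
theorem stmt_6 (k : Type) [Field k] (n : ℕ) (hn : 4 ≤ n)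
    (G : SimpleGraph (Fin n)) (hG : ∀ v : Fin n, ∃ u : Fin n, G.Adj v u)
    (m : ℕ) (hm : 3 ≤ m) :
    symbolicPower k G m = (symbolicPower k G 1) ^ m ↔
      n = 4 ∧ (IsPathGraph G ∨ IsCycleGraph G ∨ IsTwoDisjointEdges G) := by
  constructor
  · intro heq
    obtain rfl : n = 4 := by
      by_contra hn4
      by_cases hcomplete : ∀ u v : Fin n, u ≠ v → G.Adj u v
      · exact symbolicPower_ne_pow_of_forall_adj hn hcomplete (by omega) heq
      · obtain ⟨u, v, huv, hnadj⟩ : ∃ u v : Fin n, u ≠ v ∧ ¬G.Adj u v := by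
          simpa using hcomplete
        exact symbolicPower_ne_pow_of_not_adj (by omega) hG hm huv hnadj heq
    have hnadj : ∀ v : Fin 4, ∃ u, u ≠ v ∧ ¬G.Adj v u := by
      by_contra! h
      obtain ⟨v, hv⟩ := h
      exact symbolicPower_ne_pow_of_universal_vertex hv (by omega) heq
    obtain ⟨g, hg⟩ := exists_isAlternatingSquare_of_forall_adj_of_forall_not_adj hG hnadj
    exact ⟨rfl, hg.isPathGraph_or_isCycleGraph_or_isTwoDisjointEdges⟩
  · rintro ⟨rfl, hG⟩
    obtain ⟨g, hg⟩ :=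
      exists_isAlternatingSquare_of_isPathGraph_or_isCycleGraph_or_isTwoDisjointEdges hG
    exact hg.symbolicPower_eq_pow m
end

section
/- Let I be a monomial ideal of S = k[x_1,…,x_n] without embedded associated prime ideals (i.e. every associated prime of S/I is a minimal prime of I), and let a ∈ ℕ^n. Then every facet of Δ_a(I) is a facet of Δ(I). -/
/-!
For `F ⊆ [n]` let `P_F = (x_i : i ∉ F)`, a prime ideal. For a monomial ideal, `F ∈ Δ(I)` iff
`I ⊆ P_F`, so `F` is a facet of `Δ(I)` as soon as `P_F` is a minimal prime of `I`.
If `F` is a facet of `Δ_a(I)`, then for each `j ∉ F` the face `F ∪ {j}` is excluded by a minimal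
generator `x^{b_j}` with `b_j ≤ a` outside `F ∪ {j}`. A monomial `x^c` with `c = a` outside `F`
and `c` large on `F` is not in `I`, but `x_j^{N} x^c ∈ I` for every `j ∉ F`. Hence some associated
prime of `S/I` contains `P_F`; it is minimal by hypothesis, and `I ⊆ P_F`, so it equals `P_F`.
-/

open MvPolynomial

/-- `I` is a monomial ideal: it is generated by a set of monomials `x^b`. -/
def IsMonomialIdeal (k : Type) [Field k] {n : ℕ} (I : Ideal (MvPolynomial (Fin n) k)) :
    Prop :=
  ∃ B : Set (Fin n →₀ ℕ),
    I = Ideal.span ((fun b => (monomial b (1 : k) : MvPolynomial (Fin n) k)) '' B)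

/-- `x^b` is a minimal monomial generator of the monomial ideal `I`: `x^b ∈ I` and no
proper monomial divisor of `x^b` lies in `I`. -/
def IsMinimalGenerator (k : Type) [Field k] {n : ℕ}
    (I : Ideal (MvPolynomial (Fin n) k)) (b : Fin n →₀ ℕ) : Prop :=
  (monomial b (1 : k) : MvPolynomial (Fin n) k) ∈ I ∧
    ∀ c : Fin n →₀ ℕ, c ≤ b → (monomial c (1 : k) : MvPolynomial (Fin n) k) ∈ I → c = b

/-- For `a ∈ ℕ^n`, the simplicial complex `Δ_a(I)` of all `F ⊆ {1,…,n}` such that for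
every minimal monomial generator `x^b` of `I` there is an index `i ∉ F` with `b_i > a_i`. -/
def deltaA (k : Type) [Field k] {n : ℕ} (I : Ideal (MvPolynomial (Fin n) k))
    (a : Fin n → ℕ) : Set (Finset (Fin n)) :=
  { F | ∀ b : Fin n →₀ ℕ, IsMinimalGenerator k I b → ∃ i : Fin n, i ∉ F ∧ a i < b i }

/-- The simplicial complex `Δ(I)` of all `F` with `∏_{i ∈ F} x_i ∉ √I`. -/
def deltaOf (k : Type) [Field k] {n : ℕ} (I : Ideal (MvPolynomial (Fin n) k)) :
    Set (Finset (Fin n)) :=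
  { F | (∏ i ∈ F, X i : MvPolynomial (Fin n) k) ∉ I.radical }

namespace MvPolynomial

variable {σ R : Type*}

section CommSemiring

variable [CommSemiring R]

theorem monomial_one_mem_of_le {I : Ideal (MvPolynomial σ R)} {b d : σ →₀ ℕ}
    (hb : monomial b (1 : R) ∈ I) (hbd : b ≤ d) : monomial d (1 : R) ∈ I :=
  I.mem_of_dvd (monomial_dvd_monomial.mpr ⟨Or.inr hbd, dvd_rfl⟩) hb

theorem monomial_one_dvd_prod_X_pow {d : σ →₀ ℕ} {s : Finset σ} {N : ℕ}
    (hds : ∀ i ∉ s, d i = 0) (hdN : ∀ i, d i ≤ N) :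
    monomial d (1 : R) ∣ (∏ i ∈ s, X i) ^ N := by
  have hsupp : d.support ⊆ s := fun i hi =>
    by_contra fun his => Finsupp.mem_support_iff.mp hi (hds i his)
  rw [monomial_eq, C_1, one_mul, Finsupp.prod, ← Finset.prod_pow]
  exact (Finset.prod_dvd_prod_of_dvd _ _ fun i _ => pow_dvd_pow _ (hdN i)).trans
    (Finset.prod_dvd_prod_of_subset _ _ _ hsupp)

variable [Nontrivial R]

theorem monomial_one_mem_span_X_image_iff {s : Set σ} {d : σ →₀ ℕ} :
    monomial d (1 : R) ∈ Ideal.span (X '' s : Set (MvPolynomial σ R)) ↔ ∃ i ∈ s, d i ≠ 0 := by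
  classical
  simp [mem_ideal_span_X_image, support_monomial]

theorem X_mem_span_X_image_iff {s : Set σ} {j : σ} :
    (X j : MvPolynomial σ R) ∈ Ideal.span (X '' s) ↔ j ∈ s := by
  classical
  simp [X, monomial_one_mem_span_X_image_iff, Finsupp.single_apply]

theorem span_X_image_le_span_X_image_iff {s t : Set σ} :
    Ideal.span (X '' s : Set (MvPolynomial σ R)) ≤ Ideal.span (X '' t) ↔ s ⊆ t :=
  ⟨fun h _ hj => X_mem_span_X_image_iff.mp (h (X_mem_span_X_image_iff.mpr hj)),
    fun h => Ideal.span_mono (Set.image_mono h)⟩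

end CommSemiring

theorem isPrime_span_X_image [CommRing R] [IsDomain R] (s : Set σ) :
    (Ideal.span (X '' s : Set (MvPolynomial σ R))).IsPrime := by
  -- `J` is the kernel of the substitution `φ` killing the variables in `s`, because `φ` is the
  -- identity modulo `J`.
  set J := Ideal.span (X '' s : Set (MvPolynomial σ R))
  let φ : MvPolynomial σ R →ₐ[R] MvPolynomial σ R := aeval (sᶜ.indicator X)
  have hφ : (Ideal.Quotient.mkₐ R J).comp φ = Ideal.Quotient.mkₐ R J := by
    ext i
    by_cases hi : i ∈ s
    · simp only [AlgHom.comp_apply, φ, aeval_X,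
        Set.indicator_of_notMem (Set.notMem_compl_iff.mpr hi), map_zero]
      rw [Ideal.Quotient.mkₐ_eq_mk, eq_comm, Ideal.Quotient.eq_zero_iff_mem]
      exact Ideal.subset_span ⟨i, hi, rfl⟩
    · simp [φ, hi]
  have hJ : J = RingHom.ker φ := by
    refine le_antisymm (Ideal.span_le.mpr ?_) fun p hp => ?_
    · rintro _ ⟨i, hi, rfl⟩
      simp [φ, hi]
    · have h := AlgHom.congr_fun hφ p
      rw [AlgHom.comp_apply, hp, map_zero, Ideal.Quotient.mkₐ_eq_mk] at h
      exact Ideal.Quotient.eq_zero_iff_mem.mp h.symm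
  rw [hJ]
  exact RingHom.ker_isPrime _

end MvPolynomial

theorem Ideal.exists_mem_associatedPrimes_span_le {R : Type*} [CommRing R] [IsNoetherianRing R]
    {I : Ideal R} {m : R} (hm : m ∉ I) {s : Set R} (hs : ∀ x ∈ s, ∃ N : ℕ, x ^ N * m ∈ I) :
    ∃ P ∈ associatedPrimes R (R ⧸ I), Ideal.span s ≤ P := by
  obtain ⟨P, hP, hann⟩ := exists_le_isAssociatedPrime_of_isNoetherianRing R
    (Ideal.Quotient.mk I m) (by rwa [Ne, Ideal.Quotient.eq_zero_iff_mem])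
  refine ⟨P, hP, Ideal.span_le.mpr fun x hx => ?_⟩
  obtain ⟨N, hN⟩ := hs x hx
  refine hP.isPrime.mem_of_pow_mem N (hann ?_)
  rw [Submodule.mem_colon_singleton, Submodule.mem_bot, Algebra.smul_def,
    Ideal.Quotient.algebraMap_eq, ← map_mul, Ideal.Quotient.eq_zero_iff_mem]
  exact hN

section MonomialIdeal

variable {k : Type} [Field k] {n : ℕ} {I : Ideal (MvPolynomial (Fin n) k)}

theorem exists_isMinimalGenerator_le {d : Fin n →₀ ℕ} (hd : monomial d (1 : k) ∈ I) :
    ∃ c ≤ d, IsMinimalGenerator k I c := by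
  obtain ⟨c, hcd, hc⟩ := exists_minimal_le_of_wellFoundedLT (fun c => monomial c (1 : k) ∈ I) d hd
  exact ⟨c, hcd, hc.1, fun c' hc'c hc' => le_antisymm hc'c (hc.2 hc' hc'c)⟩

theorem IsMonomialIdeal.le_span_X_image_iff (hI : IsMonomialIdeal k I) {t : Set (Fin n)} :
    I ≤ Ideal.span (X '' t) ↔ ∀ d, monomial d (1 : k) ∈ I → ∃ i ∈ t, d i ≠ 0 := by
  refine ⟨fun h d hd => monomial_one_mem_span_X_image_iff.mp (h hd), fun h => ?_⟩
  obtain ⟨B, rfl⟩ := hI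
  rw [Ideal.span_le]
  rintro _ ⟨b, hb, rfl⟩
  exact monomial_one_mem_span_X_image_iff.mpr (h b (Ideal.subset_span ⟨b, hb, rfl⟩))

theorem mem_deltaOf_iff (hI : IsMonomialIdeal k I) {F : Finset (Fin n)} :
    F ∈ deltaOf k I ↔ I ≤ Ideal.span (X '' (↑F)ᶜ) := by
  have hP := isPrime_span_X_image (R := k) (↑F : Set (Fin n))ᶜ
  refine ⟨fun hF => hI.le_span_X_image_iff.mpr fun d hd => ?_, fun hIP hrad => ?_⟩
  · by_contra! hdF
    exact hF (Ideal.mem_radical_iff.mpr ⟨d.degree, I.mem_of_dvd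
      (monomial_one_dvd_prod_X_pow hdF (Finsupp.le_degree · d)) hd⟩)
  · obtain ⟨i, hiF, hi⟩ := hP.prod_mem_iff.mp (hP.radical_le_iff.mpr hIP hrad)
    exact X_mem_span_X_image_iff.mp hi hiF

theorem le_span_X_compl_of_mem_deltaA (hI : IsMonomialIdeal k I) {a : Fin n → ℕ}
    {F : Finset (Fin n)} (hF : F ∈ deltaA k I a) : I ≤ Ideal.span (X '' (↑F)ᶜ) := by
  refine hI.le_span_X_image_iff.mpr fun d hd => ?_
  obtain ⟨c, hcd, hc⟩ := exists_isMinimalGenerator_le hd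
  obtain ⟨i, hiF, hai⟩ := hF c hc
  exact ⟨i, hiF, by have := hcd i; omega⟩

theorem maximal_deltaOf_of_mem_minimalPrimes (hI : IsMonomialIdeal k I) {F : Finset (Fin n)}
    (hF : Ideal.span (X '' (↑F)ᶜ) ∈ I.minimalPrimes) : Maximal (· ∈ deltaOf k I) F := by
  refine ⟨(mem_deltaOf_iff hI).mpr hF.1.2, fun F' hF' hFF' => ?_⟩
  have hle := hF.2 ⟨isPrime_span_X_image _, (mem_deltaOf_iff hI).mp hF'⟩
    (span_X_image_le_span_X_image_iff.mpr (Set.compl_subset_compl.mpr hFF'))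
  exact Finset.coe_subset.mp (Set.compl_subset_compl.mp (span_X_image_le_span_X_image_iff.mp hle))

theorem monomial_one_notMem_of_mem_deltaA {a : Fin n → ℕ} {F : Finset (Fin n)}
    (hF : F ∈ deltaA k I a) {c : Fin n →₀ ℕ} (hc : ∀ i ∉ F, c i ≤ a i) :
    monomial c (1 : k) ∉ I := fun hcI => by
  obtain ⟨c', hc'c, hc'⟩ := exists_isMinimalGenerator_le hcI
  obtain ⟨i, hiF, hai⟩ := hF c' hc'
  have := hc'c i
  have := hc i hiF
  omega

theorem exists_isMinimalGenerator_of_maximal_deltaA {a : Fin n → ℕ} {F : Finset (Fin n)}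
    (hF : Maximal (· ∈ deltaA k I a) F) {j : Fin n} (hj : j ∉ F) :
    ∃ b, IsMinimalGenerator k I b ∧ ∀ i ∉ insert j F, b i ≤ a i := by
  have hjF : insert j F ∉ deltaA k I a := fun h =>
    hj (hF.2 h (F.subset_insert j) (F.mem_insert_self j))
  simpa [deltaA] using hjF

theorem exists_monomial_one_notMem_pow_mul_mem_of_maximal_deltaA {a : Fin n → ℕ}
    {F : Finset (Fin n)} (hF : Maximal (· ∈ deltaA k I a) F) :
    ∃ c, monomial c (1 : k) ∉ I ∧ ∀ j ∉ F, ∃ N : ℕ, X j ^ N * monomial c (1 : k) ∈ I := by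
  choose! b hb hba using fun j (hj : j ∉ F) => exists_isMinimalGenerator_of_maximal_deltaA hF hj
  -- `c = a` off `F` keeps `x^c` out of `I`; on `F` it dominates every `b j`.
  let c : Fin n →₀ ℕ := Finsupp.equivFunOnFinite.symm fun i =>
    if i ∈ F then Finset.univ.sup (b · i) else a i
  have hc (i : Fin n) : c i = if i ∈ F then Finset.univ.sup (b · i) else a i := rfl
  refine ⟨c, monomial_one_notMem_of_mem_deltaA hF.1 fun i hi => by rw [hc, if_neg hi],
    fun j hj => ⟨b j j, ?_⟩⟩
  rw [X_pow_eq_monomial, monomial_mul, one_mul]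
  refine monomial_one_mem_of_le (hb j hj).1 fun i => ?_
  rw [Finsupp.add_apply, hc]
  split_ifs with hiF
  · exact le_add_left (Finset.le_sup (f := (b · i)) (Finset.mem_univ j))
  obtain rfl | hij := eq_or_ne i j
  · simp
  · exact le_add_left (hba j hj i (by simp [hij, hiF]))

theorem span_X_compl_mem_minimalPrimes (hI : IsMonomialIdeal k I)
    (hunmixed : ∀ p ∈ associatedPrimes (MvPolynomial (Fin n) k) (MvPolynomial (Fin n) k ⧸ I),
      p ∈ I.minimalPrimes)
    {a : Fin n → ℕ} {F : Finset (Fin n)} (hF : Maximal (· ∈ deltaA k I a) F) :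
    Ideal.span (X '' (↑F)ᶜ) ∈ I.minimalPrimes := by
  obtain ⟨c, hc, hpow⟩ := exists_monomial_one_notMem_pow_mul_mem_of_maximal_deltaA hF
  obtain ⟨Q, hQ, hPQ⟩ := Ideal.exists_mem_associatedPrimes_span_le hc
    (s := X '' (↑F)ᶜ) (by rintro _ ⟨j, hj, rfl⟩; exact hpow j hj)
  have hQI := hunmixed Q hQ
  rwa [le_antisymm hPQ (hQI.2 ⟨isPrime_span_X_image _, le_span_X_compl_of_mem_deltaA hI hF.1⟩ hPQ)]

end MonomialIdeal

/-- If the monomial ideal `I` has no embedded associated primes (every associated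
prime of `S/I` is a minimal prime of `I`) and `a ∈ ℕ^n`, then every facet of `Δ_a(I)`
is a facet of `Δ(I)`. -/
theorem stmt_13 (k : Type) [Field k] (n : ℕ)
    (I : Ideal (MvPolynomial (Fin n) k)) (hI : IsMonomialIdeal k I)
    (hunmixed : ∀ p ∈ associatedPrimes (MvPolynomial (Fin n) k)
        (MvPolynomial (Fin n) k ⧸ I), p ∈ I.minimalPrimes)
    (a : Fin n → ℕ) :
    ∀ F : Finset (Fin n),
      F ∈ deltaA k I a → (∀ F' ∈ deltaA k I a, F ⊆ F' → F = F') →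
      F ∈ deltaOf k I ∧ ∀ F' ∈ deltaOf k I, F ⊆ F' → F = F' := by
  intro F hF hFmax
  have hFacet : Maximal (· ∈ deltaA k I a) F := maximal_iff.mpr ⟨hF, fun F' => hFmax F'⟩
  exact maximal_iff.mp
    (maximal_deltaOf_of_mem_minimalPrimes hI (span_X_compl_mem_minimalPrimes hI hunmixed hFacet))
end

section
/- Let n ≥ 5 and m ≥ 3. Then for every simple graph G on the vertex set {1,…,n} with no isolated vertices, I_G^{(m)} ≠ I_G^m. -/
open MvPolynomial

/-!
A monomial `x^d` lies in `P_{ij}` iff its support is not contained in `{i, j}`. As `G` has no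
isolated vertices, every monomial of `I_G` therefore has degree at least `2`, and at least `3`
when `G` is complete; so `I_G ⊆ 𝔪^c` and `I_G^m ⊆ 𝔪^{cm}` for `𝔪 = (x_1, …, x_n)`, with
`c = 2` resp. `c = 3`. On the other hand `x^d ∈ P_{ij}^m` as soon as `deg d - d_i - d_j ≥ m`,
and this holds for every edge of `G` for a monomial of degree `cm - 1`:
`x_p^{m-2} x_q^{m-2} x_u x_v x_w` with `{p, q}` a non-edge, and
`x_a^{m-1} x_b^{m-1} x_c^{m-1} x_e^2` when `G` is complete.
-/

theorem MvPolynomial.monomial_one_mem_span_X_image_pow {σ R : Type*} [CommSemiring R]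
    [Fintype σ] [DecidableEq σ] (s : Finset σ) {d : σ →₀ ℕ} {m : ℕ}
    (h : m ≤ ∑ t ∈ s, d t) :
    monomial d (1 : R) ∈ Ideal.span (X '' (s : Set σ)) ^ m := by
  have hs : ∏ t ∈ s, (X t : MvPolynomial σ R) ^ d t ∈
      Ideal.span (X '' (s : Set σ)) ^ ∑ t ∈ s, d t := by
    rw [← Finset.prod_pow_eq_pow_sum]
    exact Ideal.prod_mem_prod fun t ht =>
      Ideal.pow_mem_pow (Ideal.subset_span (Set.mem_image_of_mem X (Finset.mem_coe.mpr ht))) _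
  rw [monomial_eq, C_1, one_mul, Finsupp.prod_fintype _ _ fun _ => pow_zero _,
    ← Finset.prod_mul_prod_compl s]
  exact Ideal.pow_le_pow_right h (Ideal.mul_mem_right _ _ hs)

theorem Finsupp.sum_single_one_apply {σ : Type*} [DecidableEq σ] (W : Finset σ) (t : σ) :
    (∑ w ∈ W, Finsupp.single w 1 : σ →₀ ℕ) t = if t ∈ W then 1 else 0 := by
  simp [Finsupp.finsetSum_apply, Finsupp.single_apply]

theorem SimpleGraph.two_le_card_of_forall_adj_not_subset {V : Type*} [DecidableEq V]
    [Nonempty V] {G : SimpleGraph V} (hG : ∀ v, ∃ u, G.Adj v u) {S : Finset V}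
    (hS : ∀ i j, G.Adj i j → ¬ S ⊆ {i, j}) : 2 ≤ S.card := by
  by_contra! h
  obtain ⟨t, ht⟩ := Finset.card_le_one_iff_subset_singleton.mp (Nat.le_of_lt_succ h)
  obtain ⟨u, htu⟩ := hG t
  exact hS t u htu (ht.trans (by simp))

theorem Finset.three_le_card_of_forall_ne_not_subset {V : Type*} [DecidableEq V] [Fintype V]
    (hV : 2 ≤ Fintype.card V) {S : Finset V} (hS : ∀ i j, i ≠ j → ¬ S ⊆ {i, j}) :
    3 ≤ S.card := by
  by_contra! h
  obtain ⟨T, hST, hT⟩ := exists_superset_card_eq (Nat.le_of_lt_succ h) hV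
  obtain ⟨i, j, hij, rfl⟩ := card_eq_two.mp hT
  exact hS i j hij hST

theorem SimpleGraph.Adj.ne_or_ne_of_not_adj {V : Type*} {G : SimpleGraph V} {i j p q : V}
    (hij : G.Adj i j) (hpq : ¬ G.Adj p q) : (i ≠ p ∧ i ≠ q) ∨ (j ≠ p ∧ j ≠ q) := by
  by_contra! h
  have hi : i = p ∨ i = q := by tauto
  have hj : j = p ∨ j = q := by tauto
  rcases hi with rfl | rfl <;> rcases hj with rfl | rfl
  · exact G.irrefl hij
  · exact hpq hij
  · exact hpq hij.symm
  · exact G.irrefl hij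

section

variable {k : Type} [Field k] {n : ℕ} {G : SimpleGraph (Fin n)} {m : ℕ}

theorem varPrime_eq_span_X_compl (i j : Fin n) :
    varPrime k i j = Ideal.span (X '' ↑({i, j}ᶜ : Finset (Fin n))) := by
  unfold varPrime
  congr 2
  ext t
  simp [and_comm]

theorem mem_symbolicPower_iff_s16 {f : MvPolynomial (Fin n) k} :
    f ∈ symbolicPower k G m ↔ ∀ i j, G.Adj i j → f ∈ varPrime k i j ^ m := by
  simp [symbolicPower]

theorem support_not_subset_of_mem_symbolicPower_one {f : MvPolynomial (Fin n) k}
    (hf : f ∈ symbolicPower k G 1) {d : Fin n →₀ ℕ} (hd : d ∈ f.support) {i j : Fin n}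
    (hij : G.Adj i j) : ¬ d.support ⊆ {i, j} := by
  have hP := mem_symbolicPower_iff_s16.mp hf i j hij
  rw [pow_one, varPrime, mem_ideal_span_X_image] at hP
  obtain ⟨t, ⟨hti, htj⟩, ht⟩ := hP d hd
  intro hsub
  have := hsub (Finsupp.mem_support_iff.mpr ht)
  simp only [Finset.mem_insert, Finset.mem_singleton] at this
  tauto

theorem symbolicPower_one_le_pow_idealOfVars {c : ℕ}
    (hc : ∀ S : Finset (Fin n), (∀ i j, G.Adj i j → ¬ S ⊆ {i, j}) → c ≤ S.card) :
    symbolicPower k G 1 ≤ idealOfVars (Fin n) k ^ c := by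
  intro f hf
  rw [mem_pow_idealOfVars_iff]
  intro d hd
  calc c ≤ d.support.card :=
        hc _ fun i j hij => support_not_subset_of_mem_symbolicPower_one hf hd hij
    _ ≤ d.degree := by
        simpa [Finsupp.degree_apply] using d.support.card_nsmul_le_sum d 1
          fun t ht => Nat.one_le_iff_ne_zero.mpr (Finsupp.mem_support_iff.mp ht)

theorem monomial_one_mem_symbolicPower {d : Fin n →₀ ℕ}
    (hd : ∀ i j, G.Adj i j → d i + d j + m ≤ d.degree) :
    monomial d (1 : k) ∈ symbolicPower k G m := by
  refine mem_symbolicPower_iff_s16.mpr fun i j hij => ?_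
  rw [varPrime_eq_span_X_compl]
  refine monomial_one_mem_span_X_image_pow _ ?_
  have hsplit := Finset.sum_compl_add_sum ({i, j} : Finset (Fin n)) d
  rw [Finset.sum_pair (G.ne_of_adj hij), ← Finsupp.degree_eq_sum] at hsplit
  have := hd i j hij
  omega

theorem symbolicPower_ne_pow_of_degree_lt {c : ℕ}
    (hc : symbolicPower k G 1 ≤ idealOfVars (Fin n) k ^ c) {d : Fin n →₀ ℕ}
    (hd : ∀ i j, G.Adj i j → d i + d j + m ≤ d.degree) (hdeg : d.degree < c * m) :
    symbolicPower k G m ≠ symbolicPower k G 1 ^ m := by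
  intro h
  have hmem : monomial d (1 : k) ∈ idealOfVars (Fin n) k ^ (c * m) := by
    rw [pow_mul]
    exact Ideal.pow_right_mono hc m (h ▸ monomial_one_mem_symbolicPower hd)
  rw [monomial_mem_pow_idealOfVars_iff _ _ one_ne_zero] at hmem
  omega

theorem exists_degree_lt_two_mul_of_not_adj (hn : 5 ≤ n) (hm : 3 ≤ m) {p q : Fin n}
    (hpq : p ≠ q) (hpq' : ¬ G.Adj p q) :
    ∃ d : Fin n →₀ ℕ,
      (∀ i j, G.Adj i j → d i + d j + m ≤ d.degree) ∧ d.degree < 2 * m := by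
  obtain ⟨W, hW, hWcard⟩ : ∃ W ⊆ ({p, q} : Finset (Fin n))ᶜ, W.card = 3 := by
    refine Finset.exists_subset_card_eq ?_
    rw [Finset.card_compl, Finset.card_pair hpq, Fintype.card_fin]
    omega
  have hpW : p ∉ W := fun h => by simpa using hW h
  have hqW : q ∉ W := fun h => by simpa using hW h
  set d : Fin n →₀ ℕ := Finsupp.single p (m - 2) + Finsupp.single q (m - 2) +
    ∑ w ∈ W, Finsupp.single w 1 with hd
  have hdeg : d.degree = 2 * (m - 2) + 3 := by
    simp only [hd, map_add, map_sum, Finsupp.degree_single, Finset.sum_const, hWcard]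
    ring
  have hd_apply (t : Fin n) : d t =
      (if p = t then m - 2 else 0) + (if q = t then m - 2 else 0) + (if t ∈ W then 1 else 0) := by
    simp only [hd, Finsupp.add_apply, Finsupp.sum_single_one_apply, Finsupp.single_apply]
  have hd_off {t : Fin n} (htp : t ≠ p) (htq : t ≠ q) : d t ≤ 1 := by
    rw [hd_apply, if_neg htp.symm, if_neg htq.symm]
    split_ifs <;> simp
  have hd_le (t : Fin n) : d t ≤ m - 2 := by
    rcases eq_or_ne t p with rfl | htp
    · rw [hd_apply, if_pos rfl, if_neg hpq.symm, if_neg hpW]; omega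
    rcases eq_or_ne t q with rfl | htq
    · rw [hd_apply, if_neg htp.symm, if_pos rfl, if_neg hqW]; omega
    have := hd_off htp htq
    omega
  refine ⟨d, fun i j hij => ?_, by omega⟩
  have hi := hd_le i
  have hj := hd_le j
  rcases hij.ne_or_ne_of_not_adj hpq' with ⟨hip, hiq⟩ | ⟨hjp, hjq⟩
  · have := hd_off hip hiq; omega
  · have := hd_off hjp hjq; omega

theorem exists_degree_lt_three_mul (hn : 4 ≤ n) (hm : 3 ≤ m) :
    ∃ d : Fin n →₀ ℕ, (∀ i j, d i + d j + m ≤ d.degree) ∧ d.degree < 3 * m := by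
  set e : Fin n := ⟨0, by omega⟩
  obtain ⟨T, hT, hTcard⟩ : ∃ T ⊆ ({e} : Finset (Fin n))ᶜ, T.card = 3 := by
    refine Finset.exists_subset_card_eq ?_
    rw [Finset.card_compl, Finset.card_singleton, Fintype.card_fin]
    omega
  have heT : e ∉ T := fun h => by simpa using hT h
  set d : Fin n →₀ ℕ :=
    (m - 1) • ∑ t ∈ T, Finsupp.single t 1 + Finsupp.single e 2 with hd
  have hdeg : d.degree = 3 * (m - 1) + 2 := by
    simp only [hd, map_add, map_nsmul, map_sum, Finsupp.degree_single, Finset.sum_const, hTcard]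
    ring
  have hd_le (t : Fin n) : d t ≤ m - 1 := by
    simp only [hd, Finsupp.add_apply, Finsupp.smul_apply, smul_eq_mul,
      Finsupp.sum_single_one_apply, Finsupp.single_apply]
    split_ifs with htT hte
    · exact absurd (hte ▸ htT) heT
    all_goals omega
  refine ⟨d, fun i j => ?_, by omega⟩
  have := hd_le i
  have := hd_le j
  omega

theorem symbolicPower_ne_pow_of_ne_top (hn : 5 ≤ n) (hm : 3 ≤ m) (hG : ∀ v, ∃ u, G.Adj v u)
    (hGtop : G ≠ ⊤) : symbolicPower k G m ≠ symbolicPower k G 1 ^ m := by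
  obtain ⟨p, q, hpq, hpq'⟩ := SimpleGraph.ne_top_iff_exists_not_adj.mp hGtop
  have : Nonempty (Fin n) := ⟨p⟩
  obtain ⟨d, hd, hdeg⟩ := exists_degree_lt_two_mul_of_not_adj hn hm hpq hpq'
  exact symbolicPower_ne_pow_of_degree_lt
    (symbolicPower_one_le_pow_idealOfVars fun _ hS =>
      SimpleGraph.two_le_card_of_forall_adj_not_subset hG hS) hd hdeg

theorem symbolicPower_top_ne_pow (hn : 4 ≤ n) (hm : 3 ≤ m) :
    symbolicPower k (⊤ : SimpleGraph (Fin n)) m ≠ symbolicPower k ⊤ 1 ^ m := by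
  obtain ⟨d, hd, hdeg⟩ := exists_degree_lt_three_mul hn hm
  exact symbolicPower_ne_pow_of_degree_lt
    (symbolicPower_one_le_pow_idealOfVars fun _ hS =>
      Finset.three_le_card_of_forall_ne_not_subset (by simp; omega) fun i j hij => hS i j hij)
    (fun i j _ => hd i j) hdeg

end

/-- Let `n ≥ 5` and `m ≥ 3`. Then for every simple graph `G` on `n` vertices with no
isolated vertices, `I_G^{(m)} ≠ I_G^m`. -/
theorem stmt_16 (k : Type) [Field k] (n : ℕ) (hn : 5 ≤ n)
    (m : ℕ) (hm : 3 ≤ m) :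
    ∀ G : SimpleGraph (Fin n), (∀ v : Fin n, ∃ u : Fin n, G.Adj v u) →
      symbolicPower k G m ≠ (symbolicPower k G 1) ^ m := by
  intro G hG
  rcases eq_or_ne G ⊤ with rfl | hGtop
  · exact symbolicPower_top_ne_pow (by omega) hm
  · exact symbolicPower_ne_pow_of_ne_top hn hm hG hGtop
end
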